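/- In a braided right-rigid monoidal category, the morphism ψ_V⁻¹ : V → V** defined using the braiding, coevaluation and evaluation (namely (d_{V*} ⊗ id_{V**}) ∘ (c_{V,V*} ⊗ id_{V**}) ∘ (id_V ⊗ b_{V*}), with associators as needed) is a natural isomorphism; in particular every object is naturally isomorphic to its double right dual. -/

import Mathlib

open CategoryTheory MonoidalCategory

/-- The canonical morphism `ψ_V⁻¹ : V ⟶ V**` in a braided right-rigid monoidal
category, built from the braiding, coevaluation and evaluation. -/
noncomputable def psiInv {C : Type*} [Category C] [MonoidalCategory C]
    [BraidedCategory C] [RightRigidCategory C] (V : C) : V ⟶ (Vᘁ)ᘁ :=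
  (ρ_ V).inv ≫ (V ◁ η_ (Vᘁ) ((Vᘁ)ᘁ)) ≫ (α_ V (Vᘁ) ((Vᘁ)ᘁ)).inv ≫
    (((β_ V (Vᘁ)).hom ≫ ε_ V (Vᘁ)) ▷ ((Vᘁ)ᘁ)) ≫ (λ_ ((Vᘁ)ᘁ)).hom

namespace PsiAux

open BraidedCategory

variable {C : Type*} [Category C] [MonoidalCategory C] [BraidedCategory C]
  [RightRigidCategory C]

/-- The right dual of `Vᘁ` given by `V` itself, via the swapped pairing. -/
noncomputable def swapDual (V : C) : HasRightDual (Vᘁ) :=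
  @HasRightDual.mk C _ _ (Vᘁ) V (exactPairing_swap V (Vᘁ))

lemma psiInv_eq_mate (V : C) :
    psiInv V = @rightAdjointMate C _ _ (Vᘁ) (Vᘁ) inferInstance (swapDual V) (𝟙 (Vᘁ)) := by
  show psiInv V = (ρ_ V).inv ≫ V ◁ η_ (Vᘁ) ((Vᘁ)ᘁ) ≫ V ◁ 𝟙 (Vᘁ) ▷ ((Vᘁ)ᘁ) ≫
      (α_ V (Vᘁ) ((Vᘁ)ᘁ)).inv ≫ (((β_ V (Vᘁ)).hom ≫ ε_ V (Vᘁ)) ▷ ((Vᘁ)ᘁ)) ≫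
      (λ_ ((Vᘁ)ᘁ)).hom
  simp [psiInv]

lemma swapmate_mate {V W : C} (f : V ⟶ W) :
    @rightAdjointMate C _ _ (Wᘁ) (Vᘁ) (swapDual W) (swapDual V) (fᘁ) = f := by
  show (ρ_ V).inv ≫
      V ◁ (η_ W (Wᘁ) ≫ (β_ (Wᘁ) W).inv) ≫ V ◁ fᘁ ▷ W ≫ (α_ V (Vᘁ) W).inv ≫
        (((β_ V (Vᘁ)).hom ≫ ε_ V (Vᘁ)) ▷ W) ≫ (λ_ W).hom = f
  simp only [MonoidalCategory.whiskerLeft_comp, comp_whiskerRight, Category.assoc]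
  rw [← MonoidalCategory.whiskerLeft_comp_assoc (V) ((β_ (Wᘁ) W).inv),
    ← braiding_inv_naturality_right, MonoidalCategory.whiskerLeft_comp_assoc,
    ← MonoidalCategory.whiskerLeft_comp_assoc (V) (η_ W (Wᘁ)),
    coevaluation_comp_rightAdjointMate, MonoidalCategory.whiskerLeft_comp_assoc,
    ← MonoidalCategory.whiskerLeft_comp_assoc (V) (f ▷ (Vᘁ)),
    braiding_inv_naturality_left, MonoidalCategory.whiskerLeft_comp_assoc,
    associator_inv_naturality_right_assoc, whisker_exchange_assoc,
    whisker_exchange_assoc, MonoidalCategory.leftUnitor_naturality]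
  have h := @ExactPairing.coevaluation_evaluation C _ _ (Vᘁ) V (exactPairing_swap V (Vᘁ))
  have hη : @ExactPairing.coevaluation C _ _ (Vᘁ) V (exactPairing_swap V (Vᘁ)) =
      η_ V (Vᘁ) ≫ (β_ (Vᘁ) V).inv := rfl
  have hε : @ExactPairing.evaluation C _ _ (Vᘁ) V (exactPairing_swap V (Vᘁ)) =
      (β_ V (Vᘁ)).hom ≫ ε_ V (Vᘁ) := rfl
  rw [hη, hε] at h
  simp only [MonoidalCategory.whiskerLeft_comp, comp_whiskerRight, Category.assoc] at h
  rw [reassoc_of% h]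
  simp

end PsiAux

/-- `ψ_V⁻¹ : V ⟶ V**` is a natural isomorphism: every object of a braided
right-rigid monoidal category is naturally isomorphic to its double right dual. -/
theorem stmt_10 {C : Type*} [Category C] [MonoidalCategory C] [BraidedCategory C]
    [RightRigidCategory C] :
    (∀ V : C, IsIso (psiInv V)) ∧
    (∀ {V W : C} (f : V ⟶ W),
      f ≫ psiInv W = psiInv V ≫ rightAdjointMate (rightAdjointMate f)) := by
  open PsiAux BraidedCategory in
  constructor
  · intro V
    rw [psiInv_eq_mate]
    exact (rightDualIso (BraidedCategory.exactPairing_swap V (Vᘁ))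
      (inferInstance : ExactPairing (Vᘁ) ((Vᘁ)ᘁ))).isIso_hom
  · intro V W f
    have e1 : @rightAdjointMate C _ _ (Wᘁ) (Vᘁ) inferInstance (swapDual V) (fᘁ) =
        psiInv V ≫ rightAdjointMate (rightAdjointMate f) := by
      rw [psiInv_eq_mate]
      have h := @comp_rightAdjointMate C _ _ (Wᘁ) (Vᘁ) (Vᘁ) inferInstance inferInstance
        (swapDual V) (fᘁ) (𝟙 (Vᘁ))
      rw [Category.comp_id] at h
      exact h
    have e2 : @rightAdjointMate C _ _ (Wᘁ) (Vᘁ) inferInstance (swapDual V) (fᘁ) =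
        f ≫ psiInv W := by
      have h := @comp_rightAdjointMate C _ _ (Wᘁ) (Wᘁ) (Vᘁ) inferInstance (swapDual W)
        (swapDual V) (𝟙 (Wᘁ)) (fᘁ)
      rw [Category.id_comp] at h
      rw [h, swapmate_mate, psiInv_eq_mate]
      rfl
    rw [← e1, e2]
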